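/- Let (Ω, ℱ, μ) be a probability space, E and F measurable spaces, Z : Ω → E, W : Ω → F, U : Ω → ℝ, Y : Ω → ℝ random variables with Y integrable, g : E × F → ℝ measurable, and define Y* := g(Z, W) + U. Fix w ∈ F with μ(W = w) > 0 and let μ_w := μ(· | {W = w}) be the conditional probability measure. Assume: (i) h : ℝ × F → ℝ is measurable, h(Y*, W) is μ-integrable, and (ω ↦ h(Y*(ω), W(ω))) is a version of E[Y | σ(Y*, Z, W)] under μ; (ii) under μ_w the random variables Z and U are independent; (iii) for every t ∈ ℝ the random variable ω ↦ h(t + U(ω), w) is μ_w-integrable. Define H_w : ℝ → ℝ by H_w(t) := E_{μ_w}[h(t + U, w)] and g_w : E → ℝ by g_w(z) := g(z, w). Then, under the measure μ_w, H_w(g_w(Z)) is a version of the conditional expectation E_{μ_w}[Y | σ(Z)]. -/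

import Mathlib

/-!
Under `μ_w = μ(· | W = w)` we have `W = w` almost surely. Since `{W = w}` is measurable for
`σ(Y*, Z, W)`, conditioning `μ` on it does not change `E[Y | Y*, Z, W] = h(Y*, W)`, so the tower
property gives `E_{μ_w}[Y | Z] = E_{μ_w}[h(g(Z, w) + U, w) | Z]`. As `Z` and `U` are independent
under `μ_w`, this conditional expectation is obtained by freezing `Z` and integrating out `U`
against its law, which is `H_w(g_w(Z))`.
-/

open MeasureTheory ProbabilityTheory

theorem MeasureTheory.Integrable.cond {Ω E : Type*} {mΩ : MeasurableSpace Ω} {μ : Measure Ω}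
    {s : Set Ω} [NormedAddCommGroup E] {f : Ω → E} (hf : Integrable f μ) :
    Integrable f μ[|s] := by
  by_cases hs : μ s = 0
  · simp [cond_eq_zero_of_meas_eq_zero hs]
  · exact hf.restrict.smul_measure (ENNReal.inv_ne_top.2 hs)

namespace ProbabilityTheory

section CondMeasure

variable {Ω E : Type*} {mΩ : MeasurableSpace Ω} {μ : Measure Ω} {s : Set Ω}
  [NormedAddCommGroup E] [NormedSpace ℝ E]

theorem setIntegral_cond {A : Set Ω} (hA : MeasurableSet A) (f : Ω → E) :
    ∫ x in A, f x ∂μ[|s] = (μ s).toReal⁻¹ • ∫ x in A ∩ s, f x ∂μ := by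
  rw [cond, Measure.restrict_smul, integral_smul_measure, Measure.restrict_restrict hA,
    ENNReal.toReal_inv]

variable [CompleteSpace E] {f : Ω → E}

theorem condExp_cond_ae_eq {m : MeasurableSpace Ω} (hm : m ≤ mΩ) [SigmaFinite (μ.trim hm)]
    (hs : MeasurableSet[m] s) (hf : Integrable f μ) :
    μ[|s][f|m] =ᵐ[μ[|s]] μ[f|m] := by
  refine (ae_eq_condExp_of_forall_setIntegral_eq hm hf.cond
    (fun _ _ _ => integrable_condExp.cond.integrableOn) (fun A hA _ => ?_)
    stronglyMeasurable_condExp.aestronglyMeasurable).symm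
  rw [setIntegral_cond (hm _ hA), setIntegral_cond (hm _ hA),
    setIntegral_condExp hm hf (hA.inter hs)]

theorem condExp_cond_ae_eq_of_condExp_ae_eq [IsFiniteMeasure μ] {m₁ m₂ : MeasurableSpace Ω}
    (hm₁₂ : m₁ ≤ m₂) (hm₂ : m₂ ≤ mΩ) (hs : MeasurableSet[m₂] s) {f' : Ω → E}
    (hf : Integrable f μ) (hff' : μ[f|m₂] =ᵐ[μ] f') :
    μ[|s][f|m₁] =ᵐ[μ[|s]] μ[|s][f'|m₁] :=
  (condExp_condExp_of_le hm₁₂ hm₂).symm.trans <| condExp_congr_ae <|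
    (condExp_cond_ae_eq hm₂ hs hf).trans (cond_absolutelyContinuous.ae_le hff')

end CondMeasure

section Independence

variable {Ω β Ω' F : Type*} {mΩ : MeasurableSpace Ω} {mβ : MeasurableSpace β}
  {mΩ' : MeasurableSpace Ω'} [StandardBorelSpace Ω'] [Nonempty Ω']
  {μ : Measure Ω} [IsFiniteMeasure μ] {X : Ω → β} {Y : Ω → Ω'}

theorem IndepFun.condDistrib_ae_eq_const (hXY : IndepFun X Y μ) (hX : AEMeasurable X μ)
    (hY : AEMeasurable Y μ) :
    condDistrib Y X μ =ᵐ[μ.map X] Kernel.const β (μ.map Y) :=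
  condDistrib_ae_eq_of_measure_eq_compProd X hY <| by
    rw [Measure.compProd_const]
    exact (indepFun_iff_map_prod_eq_prod_map_map hX hY).mp hXY

theorem IndepFun.condExp_comp_prod_ae_eq_integral [NormedAddCommGroup F] [NormedSpace ℝ F]
    [CompleteSpace F] (hXY : IndepFun X Y μ) (hX : Measurable X) (hY : AEMeasurable Y μ)
    {f : β × Ω' → F} (hf : StronglyMeasurable f) (hfi : Integrable (fun a => f (X a, Y a)) μ) :
    μ[fun a => f (X a, Y a) | mβ.comap X] =ᵐ[μ] fun a => ∫ y, f (X a, y) ∂(μ.map Y) := by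
  filter_upwards [condExp_prod_ae_eq_integral_condDistrib hX hY hf hfi,
    ae_of_ae_map hX.aemeasurable (hXY.condDistrib_ae_eq_const hX.aemeasurable hY)]
    with a hcondExp hcondDistrib
  rw [hcondExp, hcondDistrib, Kernel.const_apply]

end Independence

end ProbabilityTheory

theorem stmt_19_general {Ω E F : Type*} [MeasurableSpace Ω] [MeasurableSpace E]
    [MeasurableSpace F] [MeasurableSingletonClass F]
    (μ : Measure Ω) [IsProbabilityMeasure μ]
    (Z : Ω → E) (W : Ω → F) (U Y : Ω → ℝ)
    (hZmeas : Measurable Z) (hWmeas : Measurable W)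
    (hUmeas : Measurable U)
    (hYint : Integrable Y μ)
    (g : E × F → ℝ) (hgmeas : Measurable g)
    (Ystar : Ω → ℝ) (hYstar : ∀ ω, Ystar ω = g (Z ω, W ω) + U ω)
    (w : F)
    (μw : Measure Ω) (hμw : μw = μ[|{ω | W ω = w}])
    (h : ℝ × F → ℝ) (hhmeas : Measurable h)
    (hhint : Integrable (fun ω => h (Ystar ω, W ω)) μ)
    (hcond : μ[Y | MeasurableSpace.comap (fun ω => (Ystar ω, Z ω, W ω)) inferInstance]
        =ᵐ[μ] fun ω => h (Ystar ω, W ω))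
    (hindep : IndepFun Z U μw)
    (Hw : ℝ → ℝ) (hHw : ∀ t : ℝ, Hw t = ∫ ω, h (t + U ω, w) ∂μw)
    (gw : E → ℝ) (hgw : ∀ z : E, gw z = g (z, w)) :
    μw[Y | MeasurableSpace.comap Z inferInstance] =ᵐ[μw] fun ω => Hw (gw (Z ω)) := by
  obtain rfl : Ystar = fun ω => g (Z ω, W ω) + U ω := funext hYstar
  obtain rfl : gw = fun z => g (z, w) := funext hgw
  obtain rfl : Hw = fun t => ∫ ω, h (t + U ω, w) ∂μw := funext hHw
  subst hμw
  have hW_eq_w : (fun ω => h (g (Z ω, W ω) + U ω, W ω)) =ᵐ[μ[|{ω | W ω = w}]]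
      fun ω => h (g (Z ω, w) + U ω, w) := by
    filter_upwards [ae_cond_mem (hWmeas (measurableSet_singleton w))] with ω hω
    rw [hω]
  have hYstarZW : Measurable fun ω => (g (Z ω, W ω) + U ω, Z ω, W ω) := by fun_prop
  have hφ : Measurable fun p : E × ℝ => h (g (p.1, w) + p.2, w) := by fun_prop
  refine (condExp_cond_ae_eq_of_condExp_ae_eq ?_ hYstarZW.comap_le ?_ hYint hcond).trans <|
    (condExp_congr_ae hW_eq_w).trans ?_
  · exact MeasurableSpace.comap_le_comap_of_eq_comp (fun p => p.2.1) (by fun_prop) rfl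
  · exact measurable_snd.snd.comp (comap_measurable _) (measurableSet_singleton w)
  refine (hindep.condExp_comp_prod_ae_eq_integral hZmeas hUmeas.aemeasurable
    hφ.stronglyMeasurable (hhint.cond.congr hW_eq_w)).trans (.of_eq ?_)
  ext ω
  exact integral_map hUmeas.aemeasurable (hφ.comp measurable_prodMk_left).aestronglyMeasurable

/-- Theorem 2.1 with a discrete control `W` taking value `w` with positive probability:
under the exclusion restriction `E[Y | Y*, Z, W] = h(Y*, W)` and conditional exogeneity
of `Z` and `U` given `W = w`, the conditional mean of `Y` given `Z` under the
conditional measure `μ_w := μ(· | W = w)` is `H_w(g_w(Z))`, where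
`H_w(t) := E_{μ_w}[h(t + U, w)]` and `g_w(z) := g(z, w)`. -/
theorem stmt_19 {Ω E F : Type*} [MeasurableSpace Ω] [MeasurableSpace E]
    [MeasurableSpace F] [MeasurableSingletonClass F]
    (μ : Measure Ω) [IsProbabilityMeasure μ]
    (Z : Ω → E) (W : Ω → F) (U Y : Ω → ℝ)
    (hZmeas : Measurable Z) (hWmeas : Measurable W)
    (hUmeas : Measurable U) (hYmeas : Measurable Y)
    (hYint : Integrable Y μ)
    (g : E × F → ℝ) (hgmeas : Measurable g)
    (Ystar : Ω → ℝ) (hYstar : ∀ ω, Ystar ω = g (Z ω, W ω) + U ω)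
    (w : F) (hw : 0 < μ {ω | W ω = w})
    (μw : Measure Ω) (hμw : μw = μ[|{ω | W ω = w}])
    (h : ℝ × F → ℝ) (hhmeas : Measurable h)
    (hhint : Integrable (fun ω => h (Ystar ω, W ω)) μ)
    (hcond : μ[Y | MeasurableSpace.comap (fun ω => (Ystar ω, Z ω, W ω)) inferInstance]
        =ᵐ[μ] fun ω => h (Ystar ω, W ω))
    (hindep : IndepFun Z U μw)
    (hint : ∀ t : ℝ, Integrable (fun ω => h (t + U ω, w)) μw)
    (Hw : ℝ → ℝ) (hHw : ∀ t : ℝ, Hw t = ∫ ω, h (t + U ω, w) ∂μw)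
    (gw : E → ℝ) (hgw : ∀ z : E, gw z = g (z, w)) :
    μw[Y | MeasurableSpace.comap Z inferInstance] =ᵐ[μw] fun ω => Hw (gw (Z ω)) :=
  stmt_19_general μ Z W U Y hZmeas hWmeas hUmeas hYint g hgmeas Ystar hYstar w μw hμw h hhmeas hhint
    hcond hindep Hw hHw gw hgw
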